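/- arXiv:1804.05454 — 6 statements merged into one kernel-verified Lean document; each statement's English description precedes it below -/
import Mathlib

section
/- For a real-valued random variable Y with E[Y]=0, E[Y^2]=σ², and Y ≤ s almost surely (s > 0), and for any λ ≥ 0, the moment generating function satisfies E[e^{λY}] ≤ (σ²/s²)(e^{λs} − 1 − λs) + 1. -/
/-!
Write `g u = (exp u - 1 - u) / u ^ 2`. The pointwise inequality
`exp u ≤ 1 + u + g t * u ^ 2` for `u ≤ t` holds because `g` is nondecreasing:
for `u > 0` its power series `∑ uⁿ / (n + 2)!` has nonnegative coefficients, and for `u ≤ 0`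
we have `g u ≤ 1 / 2 ≤ g t`. Taking `u = λ Y`, `t = λ s` and integrating, the linear term
vanishes because `E[Y] = 0` and the quadratic one becomes `σ²`.
-/

open MeasureTheory Real

theorem exp_le_one_add_add_sq_div_two_of_nonpos {u : ℝ} (hu : u ≤ 0) :
    exp u ≤ 1 + u + u ^ 2 / 2 := by
  have hderiv (x : ℝ) : HasDerivAt (fun x ↦ 1 + x + x ^ 2 / 2 - exp x) (1 + x - exp x) x := by
    refine ((((hasDerivAt_id' x).const_add 1).add ((hasDerivAt_pow 2 x).div_const 2)).sub
      (hasDerivAt_exp x)).congr_deriv ?_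
    ring
  have hanti : AntitoneOn (fun x ↦ 1 + x + x ^ 2 / 2 - exp x) (Set.Iic 0) :=
    antitoneOn_of_hasDerivWithinAt_nonpos (convex_Iic 0) (by fun_prop)
      (fun x _ ↦ (hderiv x).hasDerivWithinAt) fun x _ ↦ by linarith [add_one_le_exp x]
  simpa using hanti hu Set.self_mem_Iic hu

theorem hasSum_pow_div_factorial_add_two {u : ℝ} (hu : u ≠ 0) :
    HasSum (fun n : ℕ ↦ u ^ n / (n + 2).factorial) ((exp u - 1 - u) / u ^ 2) := by
  have h : HasSum (fun n : ℕ ↦ u ^ (n + 2) / (n + 2).factorial)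
      (exp u - ∑ i ∈ Finset.range 2, u ^ i / i.factorial) :=
    (hasSum_nat_add_iff' 2).2 (exp_eq_exp_ℝ ▸ NormedSpace.expSeries_div_hasSum_exp u)
  have hterm : (fun n : ℕ ↦ u ^ n / (n + 2).factorial) =
      fun n ↦ u ^ (n + 2) / (n + 2).factorial / u ^ 2 := by
    ext n
    field_simp
    ring
  rw [hterm, show exp u - 1 - u = exp u - ∑ i ∈ Finset.range 2, u ^ i / i.factorial by
    simp [Finset.sum_range_succ, sub_sub]]
  exact h.div_const _

theorem exp_sub_one_sub_div_sq_le_of_pos_of_le {u t : ℝ} (hu : 0 < u) (hut : u ≤ t) :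
    (exp u - 1 - u) / u ^ 2 ≤ (exp t - 1 - t) / t ^ 2 :=
  hasSum_le (fun n ↦ by gcongr) (hasSum_pow_div_factorial_add_two hu.ne')
    (hasSum_pow_div_factorial_add_two (hu.trans_le hut).ne')

theorem exp_le_one_add_add_mul_sq_of_le {u t : ℝ} (ht : 0 < t) (hut : u ≤ t) :
    exp u ≤ 1 + u + (exp t - 1 - t) / t ^ 2 * u ^ 2 := by
  rcases le_or_gt u 0 with hu | hu
  · have hhalf : 1 / 2 ≤ (exp t - 1 - t) / t ^ 2 := by
      rw [le_div_iff₀ (by positivity)]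
      linarith [quadratic_le_exp_of_nonneg ht.le]
    nlinarith [exp_le_one_add_add_sq_div_two_of_nonpos hu, sq_nonneg u]
  · have hg := exp_sub_one_sub_div_sq_le_of_pos_of_le hu hut
    rw [div_le_iff₀ (by positivity)] at hg
    linarith

theorem exp_mul_le_one_add_add_mul_sq_of_le {s lam y : ℝ} (hs : 0 < s) (hlam : 0 ≤ lam)
    (hy : y ≤ s) :
    exp (lam * y) ≤ 1 + lam * y + (exp (lam * s) - 1 - lam * s) / s ^ 2 * y ^ 2 := by
  rcases hlam.eq_or_lt with rfl | hlam
  · simp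
  have h := exp_le_one_add_add_mul_sq_of_le (mul_pos hlam hs)
    (mul_le_mul_of_nonneg_left hy hlam.le)
  have hscale : (exp (lam * s) - 1 - lam * s) / (lam * s) ^ 2 * (lam * y) ^ 2
      = (exp (lam * s) - 1 - lam * s) / s ^ 2 * y ^ 2 := by
    field_simp
  rwa [hscale] at h

theorem mgf_refined_bound_general {Ω : Type*} [MeasurableSpace Ω] (μ : Measure Ω)
    [IsProbabilityMeasure μ] (Y : Ω → ℝ) (σ s lam : ℝ)
    (hs : 0 < s) (hlam : 0 ≤ lam)
    (hint : Integrable Y μ) (hmean : ∫ ω, Y ω ∂μ = 0)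
    (hint2 : Integrable (fun ω => (Y ω) ^ 2) μ)
    (hvar : ∫ ω, (Y ω) ^ 2 ∂μ = σ ^ 2)
    (hbdd : ∀ᵐ ω ∂μ, Y ω ≤ s)
    (hintexp : Integrable (fun ω => Real.exp (lam * Y ω)) μ) :
    ∫ ω, Real.exp (lam * Y ω) ∂μ ≤
      σ ^ 2 / s ^ 2 * (Real.exp (lam * s) - 1 - lam * s) + 1 := by
  set c := (exp (lam * s) - 1 - lam * s) / s ^ 2
  have hlin : Integrable (fun ω ↦ 1 + lam * Y ω) μ := (integrable_const 1).add (hint.const_mul lam)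
  have hle : ∫ ω, exp (lam * Y ω) ∂μ ≤ ∫ ω, (1 + lam * Y ω + c * Y ω ^ 2) ∂μ :=
    integral_mono_ae hintexp (hlin.add (hint2.const_mul c))
      (hbdd.mono fun ω ↦ exp_mul_le_one_add_add_mul_sq_of_le hs hlam)
  have hrhs : ∫ ω, (1 + lam * Y ω + c * Y ω ^ 2) ∂μ = c * σ ^ 2 + 1 := by
    rw [integral_add hlin (hint2.const_mul c), integral_add (integrable_const 1)
      (hint.const_mul lam), integral_const_mul, integral_const_mul, hmean, hvar]
    simp [add_comm]
  calc ∫ ω, exp (lam * Y ω) ∂μ ≤ c * σ ^ 2 + 1 := hrhs ▸ hle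
    _ = σ ^ 2 / s ^ 2 * (exp (lam * s) - 1 - lam * s) + 1 := by ring

theorem mgf_refined_bound {Ω : Type*} [MeasurableSpace Ω] (μ : Measure Ω)
    [IsProbabilityMeasure μ] (Y : Ω → ℝ) (σ s lam : ℝ)
    (hs : 0 < s) (hlam : 0 ≤ lam)
    (hmeas : Measurable Y)
    (hint : Integrable Y μ) (hmean : ∫ ω, Y ω ∂μ = 0)
    (hint2 : Integrable (fun ω => (Y ω) ^ 2) μ)
    (hvar : ∫ ω, (Y ω) ^ 2 ∂μ = σ ^ 2)
    (hbdd : ∀ᵐ ω ∂μ, Y ω ≤ s)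
    (hintexp : Integrable (fun ω => Real.exp (lam * Y ω)) μ) :
    ∫ ω, Real.exp (lam * Y ω) ∂μ ≤
      σ ^ 2 / s ^ 2 * (Real.exp (lam * s) - 1 - lam * s) + 1 :=
  mgf_refined_bound_general μ Y σ s lam hs hlam hint hmean hint2 hvar hbdd hintexp
end

section
/- For q > 0, r > 0, and t ∈ (0, r), the function b(λ) = ln(q(e^{λr} − λr − 1) + 1) − λt, defined for λ ∈ ℝ, attains its minimum over ℝ at λ* = 1/t + 1/(qr) − 1/r − (1/r)·W(exp(r/t + 1/q − 1 + ln((r−t)/t))), where W is the principal branch of the Lambert W function. -/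
/-!
Writing `u = λ r`, the derivative of `b` has the sign of `k e^u + u - c`, where `k = (r - t) / t`
and `c = r / t + 1 / q - 1`; this is nondecreasing in `λ`, so `b` is minimised wherever it vanishes.
Since `k e^{c - w} = w` whenever `w e^w = k e^c`, the choice `u = c - W(k e^c)` is such a zero.
-/

open Real Set

lemma mul_exp_sub_add_sub_eq {k c w : ℝ} (h : w * exp w = k * exp c) :
    k * exp (c - w) + (c - w) = c := by
  rw [exp_sub, ← mul_div_assoc, ← h, mul_div_cancel_right₀ _ (exp_pos w).ne']
  ring

lemma mul_exp_sub_sub_one_add_one_pos {q : ℝ} (hq : 0 ≤ q) (x : ℝ) :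
    0 < q * (exp x - x - 1) + 1 := by
  have : 0 ≤ q * (exp x - x - 1) := mul_nonneg hq (by linarith [add_one_le_exp x])
  linarith

noncomputable def chernoffObjective (q r t l : ℝ) : ℝ :=
  log (q * (exp (l * r) - l * r - 1) + 1) - l * t

lemma hasDerivAt_chernoffObjective {q r t : ℝ} (hq : 0 < q) (ht : t ≠ 0) (l : ℝ) :
    HasDerivAt (chernoffObjective q r t)
      (q * t * ((r - t) / t * exp (l * r) + l * r - (r / t + 1 / q - 1)) /
        (q * (exp (l * r) - l * r - 1) + 1)) l := by
  have hg := mul_exp_sub_sub_one_add_one_pos hq.le (l * r)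
  have hmul (a : ℝ) : HasDerivAt (· * a) a l := by simpa using (hasDerivAt_id l).mul_const a
  have hb : HasDerivAt (chernoffObjective q r t)
      (q * (exp (l * r) * r - r) / (q * (exp (l * r) - l * r - 1) + 1) - t) l :=
    (((((hmul r).exp.sub (hmul r)).sub_const 1).const_mul q).add_const 1 |>.log hg.ne').sub
      (hmul t)
  convert hb using 1
  rw [eq_sub_iff_add_eq, div_add' _ _ _ hg.ne']
  congr 1
  field_simp
  ring

lemma isMinOn_chernoffObjective {q r t L : ℝ} (hq : 0 < q) (hr : 0 ≤ r) (ht : 0 < t)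
    (htr : t ≤ r) (hL : (r - t) / t * exp (L * r) + L * r = r / t + 1 / q - 1) :
    IsMinOn (chernoffObjective q r t) univ L := by
  set ψ : ℝ → ℝ := fun l => (r - t) / t * exp (l * r) + l * r
  have hψ : Monotone ψ := fun x y hxy => by
    have : 0 ≤ (r - t) / t := div_nonneg (sub_nonneg.2 htr) ht.le
    have : x * r ≤ y * r := mul_le_mul_of_nonneg_right hxy hr
    simp only [ψ]
    gcongr
  have hderiv (x : ℝ) : deriv (chernoffObjective q r t) x =
      q * t * (ψ x - ψ L) / (q * (exp (x * r) - x * r - 1) + 1) := by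
    rw [(hasDerivAt_chernoffObjective hq ht.ne' x).deriv, ← hL]
  have hdiff : Differentiable ℝ (chernoffObjective q r t) :=
    fun x => (hasDerivAt_chernoffObjective hq ht.ne' x).differentiableAt
  refine isMinOn_univ_of_deriv hdiff.continuous.continuousAt hdiff.differentiableOn
    hdiff.differentiableOn (fun x hx => ?_) (fun x hx => ?_) <;> rw [hderiv]
  · exact div_nonpos_of_nonpos_of_nonneg
      (mul_nonpos_of_nonneg_of_nonpos (by positivity) (sub_nonpos.2 (hψ (le_of_lt hx))))
      (mul_exp_sub_sub_one_add_one_pos hq.le _).le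
  · exact div_nonneg (mul_nonneg (by positivity) (sub_nonneg.2 (hψ (le_of_lt hx))))
      (mul_exp_sub_sub_one_add_one_pos hq.le _).le

theorem minimizer_via_lambertW (W : ℝ → ℝ)
    (hW : ∀ x : ℝ, -(Real.exp 1)⁻¹ ≤ x → W x * Real.exp (W x) = x ∧ -1 ≤ W x)
    (q r t : ℝ) (hq : 0 < q) (hr : 0 < r) (ht : 0 < t) (htr : t < r) :
    ∀ lam : ℝ,
      Real.log (q * (Real.exp ((1 / t + 1 / (q * r) - 1 / r -
          (1 / r) * W (Real.exp (r / t + 1 / q - 1 + Real.log ((r - t) / t)))) * r) -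
          (1 / t + 1 / (q * r) - 1 / r -
          (1 / r) * W (Real.exp (r / t + 1 / q - 1 + Real.log ((r - t) / t)))) * r - 1) + 1) -
        (1 / t + 1 / (q * r) - 1 / r -
          (1 / r) * W (Real.exp (r / t + 1 / q - 1 + Real.log ((r - t) / t)))) * t ≤
      Real.log (q * (Real.exp (lam * r) - lam * r - 1) + 1) - lam * t := by
  intro lam
  set c := r / t + 1 / q - 1
  set k := (r - t) / t
  set w := W (exp (c + log k))
  have hw : w * exp w = k * exp c := by
    have hE := (hW (exp (c + log k)) ((neg_nonpos.2 (inv_nonneg.2 (exp_pos 1).le)).trans (exp_pos _).le)).1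
    rw [hE, exp_add, exp_log (div_pos (sub_pos.2 htr) ht), mul_comm]
  have hLr : (1 / t + 1 / (q * r) - 1 / r - 1 / r * w) * r = c - w := by
    simp only [c]
    field_simp
  have hcrit := mul_exp_sub_add_sub_eq hw
  rw [← hLr] at hcrit
  exact isMinOn_chernoffObjective hq hr.le ht htr.le hcrit (mem_univ lam)
end

section
/- For q > 0, r > 0, and t ∈ (0, r), the quantity λ* = 1/t + 1/(qr) − 1/r − (1/r)·W(exp(r/t + 1/q − 1 + ln((r−t)/t))) is nonnegative, where W is the principal Lambert W function. -/
open Real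

/-! The argument of `W` equals `c · eᵃ` with `a = r/t + 1/q - 1` and `c = (r - t)/t = a - 1/q ≤ a`,
so it is at most `a · eᵃ`; as `w ↦ w eʷ` is increasing on `[0, ∞)`, this gives `W(·) ≤ a`,
while `1/t + 1/(qr) - 1/r = a/r`. -/

theorem Real.le_of_mul_exp_le_mul_exp {w a : ℝ} (ha : 0 ≤ a) (h : w * exp w ≤ a * exp a) :
    w ≤ a := by
  by_contra! haw
  have : a * exp a < w * exp w :=
    mul_lt_mul haw (exp_le_exp.mpr haw.le) (exp_pos a) (ha.trans haw.le)
  linarith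

theorem Real.exp_add_log_le_mul_exp {a c : ℝ} (hc : 0 < c) (hca : c ≤ a) :
    exp (a + log c) ≤ a * exp a := by
  rw [exp_add, exp_log hc, mul_comm]
  exact mul_le_mul_of_nonneg_right hca (exp_pos a).le

theorem minimizer_nonneg (W : ℝ → ℝ)
    (hW : ∀ x : ℝ, -(Real.exp 1)⁻¹ ≤ x → W x * Real.exp (W x) = x ∧ -1 ≤ W x)
    (q r t : ℝ) (hq : 0 < q) (hr : 0 < r) (ht : 0 < t) (htr : t < r) :
    0 ≤ 1 / t + 1 / (q * r) - 1 / r -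
      (1 / r) * W (Real.exp (r / t + 1 / q - 1 + Real.log ((r - t) / t))) := by
  set a := r / t + 1 / q - 1
  set x := exp (a + log ((r - t) / t))
  have hc : 0 < (r - t) / t := div_pos (by linarith) ht
  have hca : (r - t) / t ≤ a := by
    rw [sub_div, div_self ht.ne']
    linarith [one_div_pos.mpr hq]
  have hWx : W x * exp (W x) = x :=
    (hW x ((neg_nonpos.mpr (by positivity)).trans (exp_pos _).le)).1
  have hWa : W x ≤ a :=
    le_of_mul_exp_le_mul_exp (hc.le.trans hca) (hWx.trans_le (exp_add_log_le_mul_exp hc hca))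
  have hcoef : 1 / t + 1 / (q * r) - 1 / r = a / r := by
    simp only [a]
    field_simp
  rw [hcoef, one_div_mul_eq_div, ← sub_div]
  exact div_nonneg (by linarith) hr.le
end

section
/- For σ > 0 and s > 0, the function φ(λ) = σ²e^{λs}/((σ²/s²)(e^{λs} − λs − 1) + 1) attains its maximum over λ ∈ ℝ at λ = s/σ², with maximum value s²/(1 − e^{−s²/σ²}). -/
open Real

/-
With `x = λ s` and `t = s² / σ²` the function is `σ² eˣ / (t⁻¹ (eˣ - x - 1) + 1)`, and at the
peak `x = t` the denominator collapses to `t⁻¹ (eᵗ - 1)`. After clearing denominators,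
`φ(x) ≤ φ(t)` becomes `eᵗ (x - t + 1) ≤ eˣ`: the exponential lies above its tangent line at `t`.
-/

noncomputable def curvatureRatio (c x : ℝ) : ℝ :=
  exp x / (c * (exp x - x - 1) + 1)

lemma exp_mul_sub_add_one_le_exp (t x : ℝ) : exp t * (x - t + 1) ≤ exp x :=
  calc exp t * (x - t + 1) ≤ exp t * exp (x - t) := by gcongr; exact add_one_le_exp _
    _ = exp x := by rw [← exp_add, add_sub_cancel]

lemma curvatureRatio_denom_pos {c : ℝ} (hc : 0 ≤ c) (x : ℝ) : 0 < c * (exp x - x - 1) + 1 := by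
  have : 0 ≤ exp x - x - 1 := by linarith [add_one_le_exp x]
  positivity

lemma curvatureRatio_denom_inv_self {t : ℝ} (ht : t ≠ 0) :
    t⁻¹ * (exp t - t - 1) + 1 = t⁻¹ * (exp t - 1) := by
  field_simp
  ring

lemma curvatureRatio_le {t : ℝ} (ht : 0 < t) (x : ℝ) :
    curvatureRatio t⁻¹ x ≤ curvatureRatio t⁻¹ t := by
  have hexp : 0 < exp t - 1 := by linarith [one_lt_exp_iff.2 ht]
  rw [curvatureRatio, curvatureRatio, curvatureRatio_denom_inv_self ht.ne',
    div_le_div_iff₀ (curvatureRatio_denom_pos (inv_pos.2 ht).le x) (by positivity)]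
  linear_combination t⁻¹ * exp_mul_sub_add_one_le_exp t x + exp t * inv_mul_cancel₀ ht.ne'

lemma curvatureRatio_inv_self {t : ℝ} (ht : 0 < t) :
    curvatureRatio t⁻¹ t = t / (1 - exp (-t)) := by
  have hexp : 1 < exp t := one_lt_exp_iff.2 ht
  rw [curvatureRatio, curvatureRatio_denom_inv_self ht.ne', exp_neg]
  field_simp

theorem curvature_sup (σ s : ℝ) (hσ : 0 < σ) (hs : 0 < s) :
    (∀ lam : ℝ,
      σ ^ 2 * Real.exp (lam * s) /
          (σ ^ 2 / s ^ 2 * (Real.exp (lam * s) - lam * s - 1) + 1) ≤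
        σ ^ 2 * Real.exp ((s / σ ^ 2) * s) /
          (σ ^ 2 / s ^ 2 * (Real.exp ((s / σ ^ 2) * s) - (s / σ ^ 2) * s - 1) + 1)) ∧
    σ ^ 2 * Real.exp ((s / σ ^ 2) * s) /
        (σ ^ 2 / s ^ 2 * (Real.exp ((s / σ ^ 2) * s) - (s / σ ^ 2) * s - 1) + 1) =
      s ^ 2 / (1 - Real.exp (-(s ^ 2 / σ ^ 2))) := by
  have ht : 0 < s ^ 2 / σ ^ 2 := by positivity
  have hpeak : s / σ ^ 2 * s = s ^ 2 / σ ^ 2 := by ring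
  have hφ (x : ℝ) : σ ^ 2 * exp x / (σ ^ 2 / s ^ 2 * (exp x - x - 1) + 1) =
      σ ^ 2 * curvatureRatio (s ^ 2 / σ ^ 2)⁻¹ x := by
    rw [inv_div, curvatureRatio, mul_div_assoc]
  simp only [hpeak, hφ]
  refine ⟨fun lam => ?_, ?_⟩
  · gcongr
    exact curvatureRatio_le ht _
  · rw [curvatureRatio_inv_self ht, ← mul_div_assoc, mul_div_cancel₀ _ (by positivity)]
end

section
/- For σ > 0, s > 0, t ∈ ℝ, the function b(λ) = ln((σ²/s²)(e^{λs} − λs − 1) + 1) − λt satisfies b''(λ) ≤ s²/(1 − e^{−s²/σ²}) for all λ ∈ ℝ. -/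
/-!
Write `b λ = log g(λ) - λ t` with `g λ = c (e^{λ s} - λ s - 1) + 1` and `c = σ²/s²`. Since
`(log g)'' = g''/g - (g'/g)² ≤ g''/g` and `g'' = c s² e^{λ s}`, it suffices that
`c e^{λ s} (1 - e^{-1/c}) ≤ g λ`. After expanding, this is `c` times
`e^{x} ≥ x + 1` at `x = λ s - 1/c`.
-/

open Real

section LogSecondDeriv

variable {g g' g'' : ℝ → ℝ}

theorem deriv_log_sub_mul (hg : ∀ x, HasDerivAt g (g' x) x) (hpos : ∀ x, 0 < g x) (t : ℝ) :
    deriv (fun l => log (g l) - l * t) = fun l => g' l / g l - t :=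
  funext fun x => (((hg x).log (hpos x).ne').sub (hasDerivAt_mul_const t)).deriv

theorem deriv_deriv_log_sub_mul_le (hg : ∀ x, HasDerivAt g (g' x) x)
    (hg' : ∀ x, HasDerivAt g' (g'' x) x) (hpos : ∀ x, 0 < g x) (t x : ℝ) :
    deriv (deriv (fun l => log (g l) - l * t)) x ≤ g'' x / g x := by
  have hquot : HasDerivAt (fun l => g' l / g l - t)
      ((g'' x * g x - g' x * g' x) / g x ^ 2) x :=
    ((hg' x).div (hg x) (hpos x).ne').sub_const t
  rw [deriv_log_sub_mul hg hpos, hquot.deriv]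
  have hgx := (hpos x).ne'
  calc (g'' x * g x - g' x * g' x) / g x ^ 2 = g'' x / g x - (g' x / g x) ^ 2 := by
        field_simp
    _ ≤ g'' x / g x := sub_le_self _ (sq_nonneg _)

end LogSecondDeriv

section ExpExcess

variable (c s : ℝ)

theorem hasDerivAt_exp_sub_linear (l : ℝ) :
    HasDerivAt (fun l => c * (exp (l * s) - l * s - 1) + 1) (c * s * (exp (l * s) - 1)) l :=
  have hlin : HasDerivAt (fun l : ℝ => l * s) s l := hasDerivAt_mul_const s
  ((((hlin.exp.sub hlin).sub_const 1).const_mul c).add_const 1).congr_deriv (by ring)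

theorem hasDerivAt_exp_sub_one (l : ℝ) :
    HasDerivAt (fun l => c * s * (exp (l * s) - 1)) (c * s ^ 2 * exp (l * s)) l :=
  ((((hasDerivAt_mul_const s).exp).sub_const 1).const_mul (c * s)).congr_deriv (by ring)

variable {c}

theorem exp_sub_linear_pos (hc : 0 ≤ c) (l : ℝ) : 0 < c * (exp (l * s) - l * s - 1) + 1 := by
  have := mul_nonneg hc (sub_nonneg.2 (add_one_le_exp (l * s)))
  linarith

theorem mul_exp_mul_one_sub_le (hc : 0 < c) (l : ℝ) :
    c * exp (l * s) * (1 - exp (-c⁻¹)) ≤ c * (exp (l * s) - l * s - 1) + 1 := by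
  have hx := mul_le_mul_of_nonneg_left (add_one_le_exp (l * s - c⁻¹)) hc.le
  rw [sub_eq_add_neg (l * s), exp_add, mul_add, mul_add, mul_one, mul_neg,
    mul_inv_cancel₀ hc.ne'] at hx
  linarith

theorem div_exp_sub_linear_le (hc : 0 < c) (l : ℝ) :
    c * s ^ 2 * exp (l * s) / (c * (exp (l * s) - l * s - 1) + 1) ≤ s ^ 2 / (1 - exp (-c⁻¹)) := by
  have hE : 0 < 1 - exp (-c⁻¹) := sub_pos.2 (exp_lt_one_iff.2 (neg_neg_of_pos (inv_pos.2 hc)))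
  rw [div_le_div_iff₀ (exp_sub_linear_pos s hc.le l) hE]
  calc c * s ^ 2 * exp (l * s) * (1 - exp (-c⁻¹))
      = s ^ 2 * (c * exp (l * s) * (1 - exp (-c⁻¹))) := by ring
    _ ≤ s ^ 2 * (c * (exp (l * s) - l * s - 1) + 1) :=
        mul_le_mul_of_nonneg_left (mul_exp_mul_one_sub_le s hc l) (sq_nonneg s)

end ExpExcess

theorem second_deriv_bound (σ s t : ℝ) (hσ : 0 < σ) (hs : 0 < s) :
    ∀ lam : ℝ,
      deriv (deriv (fun l : ℝ =>
          Real.log (σ ^ 2 / s ^ 2 * (Real.exp (l * s) - l * s - 1) + 1) - l * t)) lam ≤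
        s ^ 2 / (1 - Real.exp (-(s ^ 2 / σ ^ 2))) := by
  intro lam
  have hc : 0 < σ ^ 2 / s ^ 2 := by positivity
  rw [← inv_div (σ ^ 2) (s ^ 2)]
  exact (deriv_deriv_log_sub_mul_le (hasDerivAt_exp_sub_linear _ s) (hasDerivAt_exp_sub_one _ s)
    (exp_sub_linear_pos s hc.le) t lam).trans (div_exp_sub_linear_le s hc lam)
end

section
/- For s > 0, σ > 0, and t ∈ (0, s), the minimizer λ* = 1/t + s/σ² − 1/s − (1/s)W(exp(s/t + s²/σ² − 1 + ln((s−t)/t))) of b(λ) = ln((σ²/s²)(e^{λs} − λs − 1) + 1) − λt satisfies b'(λ*) = 0, i.e., (σ²/s)(e^{λ*s} − 1) = t·((σ²/s²)(e^{λ*s} − λ*s − 1) + 1). -/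
/-!
Put `x = λ s`. Clearing denominators, `b'(λ) = 0` becomes the transcendental equation
`c e^x = d - x` with `c = (s - t)/t` and `d = s/t + s²/σ² - 1`, and any `w` with
`w e^w = c e^d`, in particular `w = W(c e^d)`, gives its solution `x = d - w`.
-/

open Real

theorem mul_exp_sub_eq_of_mul_exp_eq {w c d : ℝ} (hw : w * exp w = c * exp d) :
    c * exp (d - w) = w := by
  rw [exp_sub, ← mul_div_assoc, ← hw, mul_div_cancel_right₀ _ (exp_pos w).ne']

theorem critical_point_of_mul_exp_eq {s σ t x : ℝ} (hs : s ≠ 0) (hσ : σ ≠ 0) (ht : t ≠ 0)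
    (hx : (s - t) / t * exp x = s / t + s ^ 2 / σ ^ 2 - 1 - x) :
    σ ^ 2 / s * (exp x - 1) = t * (σ ^ 2 / s ^ 2 * (exp x - x - 1) + 1) := by
  field_simp at hx ⊢
  linear_combination hx

theorem minimizer_critical_point (W : ℝ → ℝ)
    (hW : ∀ z : ℝ, -(Real.exp 1)⁻¹ ≤ z → W z * Real.exp (W z) = z ∧ -1 ≤ W z)
    (s σ t : ℝ) (hs : 0 < s) (hσ : 0 < σ) (ht : 0 < t) (hts : t < s) :
    σ ^ 2 / s * (Real.exp ((1 / t + s / σ ^ 2 - 1 / s -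
        (1 / s) * W (Real.exp (s / t + s ^ 2 / σ ^ 2 - 1 + Real.log ((s - t) / t)))) * s)
        - 1) =
      t * (σ ^ 2 / s ^ 2 *
        (Real.exp ((1 / t + s / σ ^ 2 - 1 / s -
          (1 / s) * W (Real.exp (s / t + s ^ 2 / σ ^ 2 - 1 + Real.log ((s - t) / t)))) * s)
          - (1 / t + s / σ ^ 2 - 1 / s -
          (1 / s) * W (Real.exp (s / t + s ^ 2 / σ ^ 2 - 1 + Real.log ((s - t) / t)))) * s
          - 1) + 1) := by
  set d := s / t + s ^ 2 / σ ^ 2 - 1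
  set w := W (exp (d + log ((s - t) / t)))
  have hc : 0 < (s - t) / t := div_pos (sub_pos.2 hts) ht
  have hw : w * exp w = (s - t) / t * exp d := by
    have hz : -(exp 1)⁻¹ ≤ exp (d + log ((s - t) / t)) := by
      linarith [exp_pos (d + log ((s - t) / t)), inv_pos.2 (exp_pos 1)]
    rw [(hW _ hz).1, exp_add, exp_log hc, mul_comm]
  have hx : (1 / t + s / σ ^ 2 - 1 / s - 1 / s * w) * s = d - w := by
    simp only [d]
    field_simp
  rw [hx]
  exact critical_point_of_mul_exp_eq hs.ne' hσ.ne' ht.ne'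
    (by rw [mul_exp_sub_eq_of_mul_exp_eq hw]; ring)
end
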